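/- arXiv:2102.11786 — 2 statements merged into one kernel-verified Lean document; each statement's English description precedes it below -/
import Mathlib

section
/- Fix integers n ≥ 1, d ≥ 1, τ ≥ 1, and T a positive multiple of τ; fix reals λ_p > 0 and η₃ > 0 with η₃ ≤ 1/(√12·λ_p·τ). Let x_i^{t+1} ∈ ℝ^d be arbitrary vectors for t = 0,…,T−1 and i = 1,…,n, and let w_i^t ∈ ℝ^d be defined by: w_i⁰ = w⁰ common to all i, and for t ≥ 0, with g_i^t := λ_p(w_i^t − x_i^{t+1}): w_i^{t+1} = w_i^t − η₃·g_i^t if τ does not divide t+1, and w_i^{t+1} = (1/n)Σ_{j=1}^n (w_j^t − η₃·g_j^t) if τ divides t+1. Set w^t := (1/n)Σ_{i=1}^n w_i^t and g^t := (1/n)Σ_{j=1}^n g_j^t. Assume there are κ_i ≥ 0 such that for all t and i, ‖λ_p(w^t − x_i^{t+1}) − (1/n)Σ_{j=1}^n λ_p(w^t − x_j^{t+1})‖² ≤ κ_i, and set κ := (1/n)Σ_{i=1}^n κ_i. Then (1/T)·Σ_{t=0}^{T−1} (1/n)·Σ_{i=1}^n ‖g^t − g_i^t‖² ≤ 36·λ_p²·τ²·η₃²·κ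 + 3·κ. -/
/-!
Averaging commutes with the local steps, so `w̄ᵗ⁺¹ = w̄ᵗ - η₃ ḡᵗ` and `ḡᵗ` is the averaged gradient
evaluated at `w̄ᵗ`. Hence, between synchronizations, the deviation `eᵢ = wᵢ - w̄` evolves as
`eᵢ ↦ (1 - η₃λ_p) eᵢ - η₃ δᵢ`, where `δᵢ` is the heterogeneity term with `‖δᵢ‖ ≤ √κᵢ`. The step size
bound gives `0 ≤ η₃λ_p ≤ 2`, so `1 - η₃λ_p` is a contraction and `‖eᵢᵗ‖ ≤ (t mod τ) η₃ √κᵢ`, the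
deviation being reset to `0` at each synchronization. Finally `ḡ - gᵢ = -(δᵢ + λ_p eᵢ)`, whence
`‖ḡ - gᵢ‖² ≤ 2κᵢ + 2λ_p²τ²η₃²κᵢ`, which is below the claimed bound.
-/

open Finset

theorem Nat.add_one_mod_of_not_dvd {t τ : ℕ} (h : ¬ τ ∣ t + 1) : (t + 1) % τ = t % τ + 1 := by
  rcases Nat.eq_zero_or_pos τ with rfl | hτ
  · simp
  have hsplit : t + 1 = (t % τ + 1) + τ * (t / τ) := by linarith [Nat.mod_add_div t τ]
  have hlt : t % τ + 1 < τ := by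
    refine lt_of_le_of_ne (Nat.mod_lt t hτ) fun heq => h ?_
    rw [hsplit, heq]
    exact Dvd.intro (1 + t / τ) (by ring)
  rw [hsplit, Nat.add_mul_mod_self_left, Nat.mod_eq_of_lt hlt]

lemma le_mod_mul_of_reset {u : ℕ → ℝ} {τ T : ℕ} {b : ℝ} (h0 : u 0 ≤ 0)
    (hreset : ∀ t < T, τ ∣ t + 1 → u (t + 1) ≤ 0)
    (hstep : ∀ t < T, ¬ τ ∣ t + 1 → u (t + 1) ≤ u t + b) :
    ∀ t ≤ T, u t ≤ (t % τ : ℕ) * b := by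
  intro t ht
  induction t with
  | zero => simpa using h0
  | succ t ih =>
    by_cases hdvd : τ ∣ t + 1
    · simpa [Nat.mod_eq_zero_of_dvd hdvd] using hreset t ht hdvd
    · calc u (t + 1) ≤ (t % τ : ℕ) * b + b := by linarith [hstep t ht hdvd, ih (by omega)]
        _ = ((t + 1) % τ : ℕ) * b := by rw [Nat.add_one_mod_of_not_dvd hdvd]; push_cast; ring

lemma norm_add_sq_le_two_mul {E : Type*} [SeminormedAddCommGroup E] (u v : E) :
    ‖u + v‖ ^ 2 ≤ 2 * (‖u‖ ^ 2 + ‖v‖ ^ 2) :=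
  (pow_le_pow_left₀ (norm_nonneg _) (norm_add_le u v) 2).trans add_sq_le

section NormedSpace

variable {E : Type*} [SeminormedAddCommGroup E] [NormedSpace ℝ E]

lemma norm_one_sub_smul_sub_smul_le {a η : ℝ} (ha0 : 0 ≤ a) (ha2 : a ≤ 2) (hη : 0 ≤ η)
    (e δ : E) : ‖(1 - a) • e - η • δ‖ ≤ ‖e‖ + η * ‖δ‖ := by
  have hcontr : |1 - a| ≤ 1 := abs_le.2 ⟨by linarith, by linarith⟩
  calc ‖(1 - a) • e - η • δ‖ ≤ |1 - a| * ‖e‖ + η * ‖δ‖ := by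
        simpa [norm_smul, abs_of_nonneg hη] using norm_sub_le ((1 - a) • e) (η • δ)
    _ ≤ ‖e‖ + η * ‖δ‖ := by nlinarith [norm_nonneg e]

lemma norm_le_mod_mul_of_reset {e δ : ℕ → E} {τ T : ℕ} {a η s : ℝ}
    (ha0 : 0 ≤ a) (ha2 : a ≤ 2) (hη : 0 ≤ η)
    (h0 : e 0 = 0) (hreset : ∀ t < T, τ ∣ t + 1 → e (t + 1) = 0)
    (hstep : ∀ t < T, ¬ τ ∣ t + 1 → e (t + 1) = (1 - a) • e t - η • δ t)
    (hδ : ∀ t < T, ‖δ t‖ ≤ s) :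
    ∀ t ≤ T, ‖e t‖ ≤ (t % τ : ℕ) * (η * s) :=
  le_mod_mul_of_reset (by simp [h0]) (fun t ht h => by simp [hreset t ht h])
    fun t ht h => by
      rw [hstep t ht h]
      exact (norm_one_sub_smul_sub_smul_le ha0 ha2 hη _ _).trans
        (by gcongr; exact hδ t ht)

end NormedSpace

section Averaging

variable {ι E : Type*} [Fintype ι] [Nonempty ι] [AddCommGroup E] [Module ℝ E]

lemma average_const (v : E) : (1 / (Fintype.card ι : ℝ)) • ∑ _j : ι, v = v := by
  rw [sum_const, card_univ, ← Nat.cast_smul_eq_nsmul ℝ, smul_smul, one_div,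
    inv_mul_cancel₀ (Nat.cast_ne_zero.2 Fintype.card_ne_zero), one_smul]

variable {τ T : ℕ} {lam η : ℝ} {x w g : ι → ℕ → E} {wbar gbar : ℕ → E}

lemma average_gradient_eq (hg : ∀ i t, g i t = lam • (w i t - x i (t + 1)))
    (hwbar : ∀ t, wbar t = (1 / (Fintype.card ι : ℝ)) • ∑ i, w i t)
    (hgbar : ∀ t, gbar t = (1 / (Fintype.card ι : ℝ)) • ∑ j, g j t) (t : ℕ) :
    gbar t = (1 / (Fintype.card ι : ℝ)) • ∑ j, lam • (wbar t - x j (t + 1)) := by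
  simp only [hgbar, hg, smul_sub, sum_sub_distrib]
  congr 1
  rw [average_const, hwbar, smul_sum, smul_sum, smul_sum]
  simp only [smul_comm lam]

lemma average_succ
    (hwup : ∀ i, ∀ t < T,
      (¬ τ ∣ (t + 1) → w i (t + 1) = w i t - η • g i t) ∧
      (τ ∣ (t + 1) → w i (t + 1) = (1 / (Fintype.card ι : ℝ)) • ∑ j, (w j t - η • g j t)))
    (hwbar : ∀ t, wbar t = (1 / (Fintype.card ι : ℝ)) • ∑ i, w i t)
    (hgbar : ∀ t, gbar t = (1 / (Fintype.card ι : ℝ)) • ∑ j, g j t) {t : ℕ} (ht : t < T) :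
    wbar (t + 1) = wbar t - η • gbar t := by
  have havg : (1 / (Fintype.card ι : ℝ)) • ∑ j, (w j t - η • g j t) = wbar t - η • gbar t := by
    rw [sum_sub_distrib, ← smul_sum, smul_sub, ← hwbar, hgbar, smul_comm]
  by_cases hsync : τ ∣ t + 1
  · rw [hwbar, sum_congr rfl fun j _ => (hwup j t ht).2 hsync, average_const, havg]
  · rw [hwbar, sum_congr rfl fun j _ => (hwup j t ht).1 hsync, havg]

end Averaging

section LocalSteps

variable {ι E : Type*} [Fintype ι] [Nonempty ι] [SeminormedAddCommGroup E] [NormedSpace ℝ E]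
variable {τ T : ℕ} {lam η : ℝ} {x w g : ι → ℕ → E} {wbar gbar : ℕ → E}

lemma norm_sub_average_le (hlam : 0 ≤ lam) (hη : 0 ≤ η) (hηlam : η * lam ≤ 2) {w0 : E}
    (hw0 : ∀ i, w i 0 = w0) (hg : ∀ i t, g i t = lam • (w i t - x i (t + 1)))
    (hwup : ∀ i, ∀ t < T,
      (¬ τ ∣ (t + 1) → w i (t + 1) = w i t - η • g i t) ∧
      (τ ∣ (t + 1) → w i (t + 1) = (1 / (Fintype.card ι : ℝ)) • ∑ j, (w j t - η • g j t)))
    (hwbar : ∀ t, wbar t = (1 / (Fintype.card ι : ℝ)) • ∑ i, w i t)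
    (hgbar : ∀ t, gbar t = (1 / (Fintype.card ι : ℝ)) • ∑ j, g j t) {s : ι → ℝ}
    (hhet : ∀ t < T, ∀ i, ‖lam • (wbar t - x i (t + 1))
      - (1 / (Fintype.card ι : ℝ)) • ∑ j, lam • (wbar t - x j (t + 1))‖ ≤ s i)
    (i : ι) : ∀ t ≤ T, ‖w i t - wbar t‖ ≤ (t % τ : ℕ) * (η * s i) := by
  refine norm_le_mod_mul_of_reset (mul_nonneg hη hlam) hηlam hη ?_ (fun t ht hsync => ?_)
    (fun t ht hloc => ?_) (hhet · · i)
  · rw [hwbar, sum_congr rfl fun j _ => hw0 j, average_const, hw0, sub_self]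
  · rw [(hwup i t ht).2 hsync, hwbar (t + 1), sum_congr rfl fun j _ => (hwup j t ht).2 hsync,
      average_const, sub_self]
  · rw [(hwup i t ht).1 hloc, average_succ hwup hwbar hgbar ht, average_gradient_eq hg hwbar hgbar,
      hg]
    module

lemma sq_norm_average_sub_le (hlam : 0 ≤ lam) (hg : ∀ i t, g i t = lam • (w i t - x i (t + 1)))
    (hwbar : ∀ t, wbar t = (1 / (Fintype.card ι : ℝ)) • ∑ i, w i t)
    (hgbar : ∀ t, gbar t = (1 / (Fintype.card ι : ℝ)) • ∑ j, g j t) {t : ℕ} {i : ι} {s r : ℝ}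
    (hhet : ‖lam • (wbar t - x i (t + 1))
      - (1 / (Fintype.card ι : ℝ)) • ∑ j, lam • (wbar t - x j (t + 1))‖ ≤ s)
    (hdev : ‖w i t - wbar t‖ ≤ r) :
    ‖gbar t - g i t‖ ^ 2 ≤ 2 * (s ^ 2 + (lam * r) ^ 2) := by
  have hsplit : gbar t - g i t = -((lam • (wbar t - x i (t + 1))
      - (1 / (Fintype.card ι : ℝ)) • ∑ j, lam • (wbar t - x j (t + 1)))
      + lam • (w i t - wbar t)) := by
    rw [average_gradient_eq hg hwbar hgbar, hg]
    module
  rw [hsplit, norm_neg]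
  refine (norm_add_sq_le_two_mul _ _).trans ?_
  rw [norm_smul, Real.norm_of_nonneg hlam]
  gcongr

lemma sq_norm_average_sub_le_of_heterogeneity (hτ : 0 < τ) (hlam : 0 ≤ lam) (hη : 0 ≤ η)
    (hηlam : η * lam ≤ 2) {w0 : E} (hw0 : ∀ i, w i 0 = w0)
    (hg : ∀ i t, g i t = lam • (w i t - x i (t + 1)))
    (hwup : ∀ i, ∀ t < T,
      (¬ τ ∣ (t + 1) → w i (t + 1) = w i t - η • g i t) ∧
      (τ ∣ (t + 1) → w i (t + 1) = (1 / (Fintype.card ι : ℝ)) • ∑ j, (w j t - η • g j t)))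
    (hwbar : ∀ t, wbar t = (1 / (Fintype.card ι : ℝ)) • ∑ i, w i t)
    (hgbar : ∀ t, gbar t = (1 / (Fintype.card ι : ℝ)) • ∑ j, g j t) {κ : ι → ℝ}
    (hκpos : ∀ i, 0 ≤ κ i)
    (hκ : ∀ t < T, ∀ i, ‖lam • (wbar t - x i (t + 1))
      - (1 / (Fintype.card ι : ℝ)) • ∑ j, lam • (wbar t - x j (t + 1))‖ ^ 2 ≤ κ i)
    {t : ℕ} (ht : t < T) (i : ι) :
    ‖gbar t - g i t‖ ^ 2 ≤ 2 * (1 + (lam * τ * η) ^ 2) * κ i := by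
  have hhet : ∀ t < T, ∀ i, ‖lam • (wbar t - x i (t + 1))
      - (1 / (Fintype.card ι : ℝ)) • ∑ j, lam • (wbar t - x j (t + 1))‖ ≤ √(κ i) :=
    fun t ht i => by simpa using Real.abs_le_sqrt (hκ t ht i)
  have hdev : ‖w i t - wbar t‖ ≤ τ * η * √(κ i) :=
    (norm_sub_average_le hlam hη hηlam hw0 hg hwup hwbar hgbar hhet i t ht.le).trans
      (by rw [mul_assoc]; gcongr; exact_mod_cast (Nat.mod_lt t hτ).le)
  calc ‖gbar t - g i t‖ ^ 2 ≤ 2 * (√(κ i) ^ 2 + (lam * (τ * η * √(κ i))) ^ 2) :=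
        sq_norm_average_sub_le hlam hg hwbar hgbar (hhet t ht i) hdev
    _ = 2 * (1 + (lam * τ * η) ^ 2) * κ i := by
        linear_combination (2 + 2 * (lam * τ * η) ^ 2) * Real.sq_sqrt (hκpos i)

end LocalSteps

theorem stmt_3_general
    {n d τ T : ℕ} (hn : 1 ≤ n) (hτ : 1 ≤ τ) (hT : 0 < T)
    (lam_p η₃ : ℝ) (hlam_p : 0 < lam_p) (hη₃ : 0 < η₃)
    (hη₃' : η₃ ≤ 1 / (Real.sqrt 12 * lam_p * τ))
    (x w : Fin n → ℕ → EuclideanSpace ℝ (Fin d))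
    (w0 : EuclideanSpace ℝ (Fin d)) (hw0 : ∀ i, w i 0 = w0)
    (g : Fin n → ℕ → EuclideanSpace ℝ (Fin d))
    (hg : ∀ i t, g i t = lam_p • (w i t - x i (t + 1)))
    (hwup : ∀ i, ∀ t < T,
      (¬ τ ∣ (t + 1) → w i (t + 1) = w i t - η₃ • g i t) ∧
      (τ ∣ (t + 1) → w i (t + 1) = (1 / (n : ℝ)) • ∑ j, (w j t - η₃ • g j t)))
    (wbar gbar : ℕ → EuclideanSpace ℝ (Fin d))
    (hwbar : ∀ t, wbar t = (1 / (n : ℝ)) • ∑ i, w i t)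
    (hgbar : ∀ t, gbar t = (1 / (n : ℝ)) • ∑ j, g j t)
    (κ : Fin n → ℝ) (hκpos : ∀ i, 0 ≤ κ i)
    (hκ : ∀ t < T, ∀ i,
      ‖lam_p • (wbar t - x i (t + 1))
          - (1 / (n : ℝ)) • ∑ j, lam_p • (wbar t - x j (t + 1))‖ ^ 2 ≤ κ i)
    (κbar : ℝ) (hκbar : κbar = (1 / (n : ℝ)) * ∑ i, κ i) :
    (1 / (T : ℝ)) * ∑ t ∈ Finset.range T, (1 / (n : ℝ)) * ∑ i, ‖gbar t - g i t‖ ^ 2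
      ≤ 36 * lam_p ^ 2 * τ ^ 2 * η₃ ^ 2 * κbar + 3 * κbar := by
  have : Nonempty (Fin n) := ⟨⟨0, hn⟩⟩
  have hcard : (Fintype.card (Fin n) : ℝ) = n := by simp
  rw [← hcard] at hwup hwbar hgbar hκ hκbar ⊢
  have hηlam : η₃ * lam_p ≤ 2 := by
    have hτ' : (1 : ℝ) ≤ τ := by exact_mod_cast hτ
    have h12 : 1 ≤ √12 := Real.one_le_sqrt.2 (by norm_num)
    have hη₃_mul : η₃ * (√12 * lam_p * τ) ≤ 1 :=
      (le_div_iff₀ (by positivity)).1 (by simpa using hη₃')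
    nlinarith [mul_le_mul h12 hτ' zero_le_one (by positivity), mul_pos hη₃ hlam_p]
  have hround : ∀ t ∈ range T, (1 / (Fintype.card (Fin n) : ℝ)) * ∑ i, ‖gbar t - g i t‖ ^ 2 ≤
      2 * (1 + (lam_p * τ * η₃) ^ 2) * κbar := fun t ht => by
    calc (1 / (Fintype.card (Fin n) : ℝ)) * ∑ i, ‖gbar t - g i t‖ ^ 2
        ≤ (1 / (Fintype.card (Fin n) : ℝ)) * ∑ i, 2 * (1 + (lam_p * τ * η₃) ^ 2) * κ i := by
          gcongr with i
          exact sq_norm_average_sub_le_of_heterogeneity hτ hlam_p.le hη₃.le hηlam hw0 hg hwup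
            hwbar hgbar hκpos hκ (mem_range.1 ht) i
      _ = 2 * (1 + (lam_p * τ * η₃) ^ 2) * κbar := by rw [hκbar, ← mul_sum]; ring
  have hκbar_nonneg : 0 ≤ κbar := hκbar ▸ mul_nonneg (by positivity) (sum_nonneg fun i _ => hκpos i)
  have havg := expect_le (nonempty_range_iff.2 hT.ne') hround
  rw [expect_eq_sum_div_card, card_range, div_eq_inv_mul, ← one_div] at havg
  refine havg.trans ?_
  nlinarith [mul_nonneg (sq_nonneg (lam_p * τ * η₃)) hκbar_nonneg]

/-- Corollary to Lemma 1 of the paper: average deviation of the local gradients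
from the averaged gradient is bounded by `36 λ_p² τ² η₃² κ + 3 κ`. -/
theorem stmt_3
    {n d τ T : ℕ} (hn : 1 ≤ n) (hd : 1 ≤ d) (hτ : 1 ≤ τ) (hT : 0 < T) (hτT : τ ∣ T)
    (lam_p η₃ : ℝ) (hlam_p : 0 < lam_p) (hη₃ : 0 < η₃)
    (hη₃' : η₃ ≤ 1 / (Real.sqrt 12 * lam_p * τ))
    (x w : Fin n → ℕ → EuclideanSpace ℝ (Fin d))
    (w0 : EuclideanSpace ℝ (Fin d)) (hw0 : ∀ i, w i 0 = w0)
    (g : Fin n → ℕ → EuclideanSpace ℝ (Fin d))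
    (hg : ∀ i t, g i t = lam_p • (w i t - x i (t + 1)))
    (hwup : ∀ i, ∀ t < T,
      (¬ τ ∣ (t + 1) → w i (t + 1) = w i t - η₃ • g i t) ∧
      (τ ∣ (t + 1) → w i (t + 1) = (1 / (n : ℝ)) • ∑ j, (w j t - η₃ • g j t)))
    (wbar gbar : ℕ → EuclideanSpace ℝ (Fin d))
    (hwbar : ∀ t, wbar t = (1 / (n : ℝ)) • ∑ i, w i t)
    (hgbar : ∀ t, gbar t = (1 / (n : ℝ)) • ∑ j, g j t)
    (κ : Fin n → ℝ) (hκpos : ∀ i, 0 ≤ κ i)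
    (hκ : ∀ t < T, ∀ i,
      ‖lam_p • (wbar t - x i (t + 1))
          - (1 / (n : ℝ)) • ∑ j, lam_p • (wbar t - x j (t + 1))‖ ^ 2 ≤ κ i)
    (κbar : ℝ) (hκbar : κbar = (1 / (n : ℝ)) * ∑ i, κ i) :
    (1 / (T : ℝ)) * ∑ t ∈ Finset.range T, (1 / (n : ℝ)) * ∑ i, ‖gbar t - g i t‖ ^ 2
      ≤ 36 * lam_p ^ 2 * τ ^ 2 * η₃ ^ 2 * κbar + 3 * κbar :=
  stmt_3_general hn hτ hT lam_p η₃ hlam_p hη₃ hη₃' x w w0 hw0 g hg hwup wbar gbar hwbar hgbar κ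
    hκpos hκ κbar hκbar
end

section
/- Let L_x := L + G·L_{Q1} + G_{Q1}·L·l_{Q1}, fix λ_p ≥ 0, and set η₁ := 1/(2(2λ_p + L_x)). Fix c ∈ ℝ^m, x₀, w, w_i ∈ ℝ^d, λ ∈ ℝ, and let g₀ := ∇_x f(Q̃_c(x))|_{x=x₀}. Suppose x⁺ is a global minimizer over x ∈ ℝ^d of the function x ↦ ⟨x − x₀, ∇f(x₀)⟩ + ⟨x − x₀, g₀⟩ + ⟨x − x₀, λ_p·(x₀ − w_i)⟩ + (1/(2η₁))·‖x − x₀‖² + λ·R(x, c). Define F(x) := f(x) + f(Q̃_c(x)) + λ·R(x, c) + (λ_p/2)·‖x − w‖². Then F(x⁺) + ((2λ_p + L_x)/2)·‖x⁺ − x₀‖² ≤ F(x₀) + (λ_p/2)·‖w_i − w‖². -/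
/-!
`F₀ := f + f ∘ Q̃_c` has an `L_x`-Lipschitz derivative: `D(f ∘ Q̃_c)(a) - D(f ∘ Q̃_c)(b)` splits as
`(Df(Q̃_c a) - Df(Q̃_c b)) ∘ DQ̃_c(a) + Df(Q̃_c b) ∘ (DQ̃_c(a) - DQ̃_c(b))`. The descent lemma then
bounds `F₀(x⁺)` by its linearization at `x₀` plus `(L_x/2)‖x⁺ - x₀‖²`. Minimality of `x⁺` against
the competitor `x₀` trades the linear terms and `λR(x⁺, c)` for `λR(x₀, c) - (2λ_p + L_x)‖x⁺ - x₀‖²`,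
and expanding `‖x⁺ - w‖²` around `x₀` with Young's inequality on `⟪x⁺ - x₀, w_i - w⟫` controls the
penalty. Since `1/(2η₁) = 2λ_p + L_x`, the quadratic terms balance exactly.
-/

open RealInnerProductSpace

section Smoothness

variable {E F G : Type*} [NormedAddCommGroup E] [NormedSpace ℝ E]
  [NormedAddCommGroup F] [NormedSpace ℝ F] [NormedAddCommGroup G] [NormedSpace ℝ G]

theorem image_le_add_fderiv_add_sq {g : E → ℝ} (hg : Differentiable ℝ g) {C : ℝ}
    (hC : ∀ x y, ‖fderiv ℝ g x - fderiv ℝ g y‖ ≤ C * ‖x - y‖) (x y : E) :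
    g y ≤ g x + fderiv ℝ g x (y - x) + C / 2 * ‖y - x‖ ^ 2 := by
  set v := y - x
  set ψ : ℝ → ℝ := fun t => g (x + t • v) - t * fderiv ℝ g x v - C / 2 * ‖v‖ ^ 2 * t ^ 2
  have hψ (t : ℝ) :
      HasDerivAt ψ (fderiv ℝ g (x + t • v) v - fderiv ℝ g x v - C * ‖v‖ ^ 2 * t) t := by
    have hline : HasDerivAt (fun t : ℝ => x + t • v) v t := by
      simpa using ((hasDerivAt_id t).smul_const v).const_add x
    have hgline := (hg (x + t • v)).hasFDerivAt.comp_hasDerivAt t hline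
    have hlin := (hasDerivAt_id' t).mul_const (fderiv ℝ g x v)
    have hquad := (hasDerivAt_pow 2 t).const_mul (C / 2 * ‖v‖ ^ 2)
    exact ((hgline.sub hlin).sub hquad).congr_deriv (by push_cast; ring)
  have hψ_nonpos (t : ℝ) (ht : 0 ≤ t) :
      fderiv ℝ g (x + t • v) v - fderiv ℝ g x v - C * ‖v‖ ^ 2 * t ≤ 0 := by
    have : (fderiv ℝ g (x + t • v) - fderiv ℝ g x) v ≤ C * ‖v‖ ^ 2 * t :=
      calc (fderiv ℝ g (x + t • v) - fderiv ℝ g x) v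
          ≤ ‖fderiv ℝ g (x + t • v) - fderiv ℝ g x‖ * ‖v‖ :=
            (Real.le_norm_self _).trans (ContinuousLinearMap.le_opNorm _ _)
        _ ≤ C * ‖(x + t • v) - x‖ * ‖v‖ := by gcongr; exact hC _ _
        _ = C * ‖v‖ ^ 2 * t := by
          rw [add_sub_cancel_left, norm_smul, Real.norm_of_nonneg ht]; ring
    simpa [sub_le_iff_le_add'] using this
  have hanti : AntitoneOn ψ (Set.Icc 0 1) :=
    antitoneOn_of_hasDerivWithinAt_nonpos (convex_Icc 0 1)
      (fun t _ => (hψ t).continuousAt.continuousWithinAt) (fun t _ => (hψ t).hasDerivWithinAt)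
      (fun t ht => hψ_nonpos t (interior_subset ht).1)
  have := hanti (Set.left_mem_Icc.2 zero_le_one) (Set.right_mem_Icc.2 zero_le_one) zero_le_one
  simp only [ψ, v, one_smul, zero_smul, add_zero, add_sub_cancel] at this
  linarith

theorem norm_fderiv_add_sub_le {g h : E → F} (hg : Differentiable ℝ g) (hh : Differentiable ℝ h)
    {Cg Ch : ℝ} (hCg : ∀ x y, ‖fderiv ℝ g x - fderiv ℝ g y‖ ≤ Cg * ‖x - y‖)
    (hCh : ∀ x y, ‖fderiv ℝ h x - fderiv ℝ h y‖ ≤ Ch * ‖x - y‖) (x y : E) :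
    ‖fderiv ℝ (fun z => g z + h z) x - fderiv ℝ (fun z => g z + h z) y‖
      ≤ (Cg + Ch) * ‖x - y‖ := by
  rw [fderiv_fun_add (hg x) (hh x), fderiv_fun_add (hg y) (hh y), add_sub_add_comm, add_mul]
  exact (norm_add_le _ _).trans (add_le_add (hCg x y) (hCh x y))

theorem norm_fderiv_comp_sub_le {f : F → G} {Q : E → F} (hf : Differentiable ℝ f)
    (hQ : Differentiable ℝ Q) {Gf Lf lQ LQ GQ : ℝ} (hfG : ∀ y, ‖fderiv ℝ f y‖ ≤ Gf)
    (hfL : ∀ y y', ‖fderiv ℝ f y - fderiv ℝ f y'‖ ≤ Lf * ‖y - y'‖) (hLf : 0 ≤ Lf)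
    (hQl : ∀ x x', ‖Q x - Q x'‖ ≤ lQ * ‖x - x'‖)
    (hQL : ∀ x x', ‖fderiv ℝ Q x - fderiv ℝ Q x'‖ ≤ LQ * ‖x - x'‖)
    (hQG : ∀ x, ‖fderiv ℝ Q x‖ ≤ GQ) (x x' : E) :
    ‖fderiv ℝ (fun z => f (Q z)) x - fderiv ℝ (fun z => f (Q z)) x'‖
      ≤ (Gf * LQ + GQ * Lf * lQ) * ‖x - x'‖ := by
  set A := fderiv ℝ f (Q x)
  set A' := fderiv ℝ f (Q x')
  set B := fderiv ℝ Q x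
  set B' := fderiv ℝ Q x'
  have hsplit : A.comp B - A'.comp B' = (A - A').comp B + A'.comp (B - B') := by
    ext; simp
  have hA : ‖A - A'‖ ≤ Lf * (lQ * ‖x - x'‖) :=
    (hfL _ _).trans (mul_le_mul_of_nonneg_left (hQl x x') hLf)
  calc ‖fderiv ℝ (fun z => f (Q z)) x - fderiv ℝ (fun z => f (Q z)) x'‖
      = ‖(A - A').comp B + A'.comp (B - B')‖ := by
        rw [fderiv_fun_comp x (hf _) (hQ x), fderiv_fun_comp x' (hf _) (hQ x'), hsplit]
    _ ≤ ‖A - A'‖ * ‖B‖ + ‖A'‖ * ‖B - B'‖ :=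
        (norm_add_le _ _).trans
          (add_le_add (ContinuousLinearMap.opNorm_comp_le _ _) (ContinuousLinearMap.opNorm_comp_le _ _))
    _ ≤ Lf * (lQ * ‖x - x'‖) * GQ + Gf * (LQ * ‖x - x'‖) := by
        gcongr
        exacts [(norm_nonneg _).trans hA, hQG x, (norm_nonneg _).trans (hfG (Q x')), hfG _,
          hQL x x']
    _ = (Gf * LQ + GQ * Lf * lQ) * ‖x - x'‖ := by ring

end Smoothness

section Gradient

variable {E : Type*} [NormedAddCommGroup E] [InnerProductSpace ℝ E] [CompleteSpace E]

theorem norm_fderiv_eq_norm_gradient (g : E → ℝ) (x : E) : ‖fderiv ℝ g x‖ = ‖gradient g x‖ := by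
  rw [← toDual_gradient, LinearIsometryEquiv.norm_map]

theorem norm_fderiv_sub_eq_norm_gradient_sub (g : E → ℝ) (x y : E) :
    ‖fderiv ℝ g x - fderiv ℝ g y‖ = ‖gradient g x - gradient g y‖ := by
  rw [← toDual_gradient, ← toDual_gradient, ← map_sub, LinearIsometryEquiv.norm_map]

theorem fderiv_apply_eq_inner_gradient (g : E → ℝ) (x v : E) :
    fderiv ℝ g x v = ⟪v, gradient g x⟫ := by
  rw [← toDual_gradient, InnerProductSpace.toDual_apply_apply, real_inner_comm]

end Gradient

theorem half_mul_norm_sub_sq_le {E : Type*} [NormedAddCommGroup E] [InnerProductSpace ℝ E]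
    {lam : ℝ} (hlam : 0 ≤ lam) (x y w w' : E) :
    lam / 2 * ‖y - w‖ ^ 2 ≤ lam / 2 * ‖x - w‖ ^ 2 + ⟪y - x, lam • (x - w')⟫
      + lam * ‖y - x‖ ^ 2 + lam / 2 * ‖w' - w‖ ^ 2 := by
  have hgap := mul_nonneg hlam (sq_nonneg ‖(y - x) - (w' - w)‖)
  rw [norm_sub_sq_real] at hgap
  rw [show y - w = (x - w) + (y - x) by abel, show x - w' = (x - w) - (w' - w) by abel,
    norm_add_sq_real, real_inner_smul_right, inner_sub_right (y - x),
    real_inner_comm (x - w) (y - x)]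
  linarith

/-- Sufficient decrease of the proximal step in `x` (personalized/federated
setting): if `x⁺` globally minimizes the linearized proximal objective (with
personalization penalty towards the local copy `w_i`) at step size
`η₁ = 1/(2(2λ_p + L_x))`, then
`F(x⁺) + ((2λ_p + L_x)/2)‖x⁺ − x₀‖² ≤ F(x₀) + (λ_p/2)‖w_i − w‖²`. -/
theorem stmt_14
    {d m : ℕ}
    (f : EuclideanSpace ℝ (Fin d) → ℝ)
    (Qt : EuclideanSpace ℝ (Fin d) → EuclideanSpace ℝ (Fin m) → EuclideanSpace ℝ (Fin d))
    (R : EuclideanSpace ℝ (Fin d) → EuclideanSpace ℝ (Fin m) → ℝ)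
    (G L lQ1 LQ1 GQ1 : ℝ)
    (hf : Differentiable ℝ f)
    (hfG : ∀ x, ‖gradient f x‖ ≤ G)
    (hfL : ∀ x y, ‖gradient f x - gradient f y‖ ≤ L * ‖x - y‖)
    (hQd1 : ∀ c, Differentiable ℝ (fun x => Qt x c))
    (hQl1 : ∀ c x y, ‖Qt x c - Qt y c‖ ≤ lQ1 * ‖x - y‖)
    (hQL1 : ∀ c x y,
      ‖fderiv ℝ (fun z => Qt z c) x - fderiv ℝ (fun z => Qt z c) y‖ ≤ LQ1 * ‖x - y‖)
    (hQG1 : ∀ c x, ‖fderiv ℝ (fun z => Qt z c) x‖ ≤ GQ1)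
    (lam_p : ℝ) (hlam_p : 0 ≤ lam_p)
    (Lx η₁ : ℝ)
    (hLx : Lx = L + G * LQ1 + GQ1 * L * lQ1)
    (hη₁ : η₁ = 1 / (2 * (2 * lam_p + Lx)))
    (c : EuclideanSpace ℝ (Fin m)) (x₀ xp w wi : EuclideanSpace ℝ (Fin d)) (lam : ℝ)
    (hmin : ∀ z : EuclideanSpace ℝ (Fin d),
      ⟪xp - x₀, gradient f x₀⟫ + ⟪xp - x₀, gradient (fun y => f (Qt y c)) x₀⟫
          + ⟪xp - x₀, lam_p • (x₀ - wi)⟫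
          + (1 / (2 * η₁)) * ‖xp - x₀‖ ^ 2 + lam * R xp c
        ≤ ⟪z - x₀, gradient f x₀⟫ + ⟪z - x₀, gradient (fun y => f (Qt y c)) x₀⟫
          + ⟪z - x₀, lam_p • (x₀ - wi)⟫
          + (1 / (2 * η₁)) * ‖z - x₀‖ ^ 2 + lam * R z c) :
    (f xp + f (Qt xp c) + lam * R xp c + (lam_p / 2) * ‖xp - w‖ ^ 2)
        + ((2 * lam_p + Lx) / 2) * ‖xp - x₀‖ ^ 2
      ≤ (f x₀ + f (Qt x₀ c) + lam * R x₀ c + (lam_p / 2) * ‖x₀ - w‖ ^ 2)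
        + (lam_p / 2) * ‖wi - w‖ ^ 2 := by
  -- `hfL` forces `0 ≤ L` only once there are two distinct points
  rcases eq_or_ne xp x₀ with rfl | hne
  · simp only [sub_self, norm_zero]
    nlinarith [sq_nonneg ‖wi - w‖]
  have hL : 0 ≤ L := nonneg_of_mul_nonneg_left ((norm_nonneg _).trans (hfL xp x₀))
    (norm_pos_iff.2 (sub_ne_zero.2 hne))
  have hfL' x y := (norm_fderiv_sub_eq_norm_gradient_sub f x y).trans_le (hfL x y)
  have hfQ : Differentiable ℝ (fun x => f (Qt x c)) := hf.comp (hQd1 c)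
  have hfG' y := (norm_fderiv_eq_norm_gradient f y).trans_le (hfG y)
  have hsmooth := norm_fderiv_add_sub_le hf hfQ hfL'
    (norm_fderiv_comp_sub_le hf (hQd1 c) hfG' hfL' hL (hQl1 c) (hQL1 c) (hQG1 c))
  have hdescent :=
    image_le_add_fderiv_add_sq (g := fun x => f x + f (Qt x c)) (hf.add hfQ) hsmooth x₀ xp
  rw [fderiv_fun_add (hf x₀) (hfQ x₀), add_apply,
    fderiv_apply_eq_inner_gradient, fderiv_apply_eq_inner_gradient] at hdescent
  have hstep : 1 / (2 * η₁) = 2 * lam_p + Lx := by rw [hη₁]; field_simp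
  have hopt := hmin x₀
  simp only [sub_self, inner_zero_left, norm_zero, hstep] at hopt
  have hpenalty := half_mul_norm_sub_sq_le hlam_p x₀ xp w wi
  subst hLx
  linarith
end
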